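/- For every index i and natural number n, the Dirichlet moment satisfies E_α[p_i^n · log p_i] = (α_i^{(n)} / α₀^{(n)}) · (ψ(α_i + n) − ψ(α₀ + n)). -/

import Mathlib

/-! The Dirichlet normalisation `∫_S ∏ pⱼ^(βⱼ-1) = ∏ Γ(βⱼ) / Γ(∑ βⱼ) =: B(β)` is proved by
induction on the dimension: writing `x = (t, (1 - t) • z)` splits the integral over the
`m`-simplex into a Beta integral in `t` times the same integral over the `(m-1)`-simplex in `z`.
Differentiating the normalisation in `βᵢ` under the integral sign gives
`∫_S log pᵢ ∏ pⱼ^(βⱼ-1) = B(β) (ψ(βᵢ) - ψ(∑ β))`. Finally `pᵢⁿ f_α` is `B(α + n eᵢ) / B(α)` times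
the density with parameter `α + n eᵢ`, and that ratio of normalisations is `αᵢ^(n) / α₀^(n)`. -/

open Real MeasureTheory

/-- The open simplex `S ⊆ ℝ^{K-1}`: all coordinates positive and summing to less than 1. -/
def dirSimplex (K : ℕ) : Set (Fin (K - 1) → ℝ) :=
  {x | (∀ i, 0 < x i) ∧ ∑ i, x i < 1}

/-- The probability vector `p(x) ∈ ℝ^K` associated to `x ∈ ℝ^{K-1}`:
`pᵢ(x) = xᵢ` for `i < K - 1` and `p_{K-1}(x) = 1 - ∑_{i<K-1} xᵢ`. -/
noncomputable def probVec (K : ℕ) (x : Fin (K - 1) → ℝ) (i : Fin K) : ℝ :=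
  if h : (i : ℕ) < K - 1 then x ⟨i, h⟩ else 1 - ∑ j, x j

/-- The Dirichlet density `f_α(x) = (Γ(α₀) / ∏ᵢ Γ(αᵢ)) ∏ᵢ pᵢ(x)^{αᵢ - 1}` (on the simplex). -/
noncomputable def dirDensity {K : ℕ} (α : Fin K → ℝ) (x : Fin (K - 1) → ℝ) : ℝ :=
  (Real.Gamma (∑ i, α i) / ∏ i, Real.Gamma (α i)) * ∏ i, probVec K x i ^ (α i - 1)

/-- Dirichlet expectation `E_α[g] = ∫_S g(p(x)) f_α(x) dx` (Lebesgue measure on `ℝ^{K-1}`). -/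
noncomputable def dirE {K : ℕ} (α : Fin K → ℝ) (g : (Fin K → ℝ) → ℝ) : ℝ :=
  ∫ x in dirSimplex K, g (probVec K x) * dirDensity α x

/-- The digamma function: the derivative of `log ∘ Γ`. -/
noncomputable def digamma (t : ℝ) : ℝ := deriv (fun s => Real.log (Real.Gamma s)) t

/-- The trigamma function: the second derivative of `log ∘ Γ`. -/
noncomputable def trigamma (t : ℝ) : ℝ := deriv (deriv (fun s => Real.log (Real.Gamma s))) t

/-- The rising factorial `z^{(n)} = z (z+1) ⋯ (z+n-1)`. -/
noncomputable def risingFac (z : ℝ) (n : ℕ) : ℝ := ∏ k ∈ Finset.range n, (z + (k : ℝ))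

open Set Filter Function
open scoped ENNReal

/-! ### Beta integral -/

lemma ofReal_rpow_mul_one_sub_rpow {a b t : ℝ} (ht : t ∈ Icc (0 : ℝ) 1) :
    ((t ^ (a - 1) * (1 - t) ^ (b - 1) : ℝ) : ℂ) =
      (t : ℂ) ^ ((a : ℂ) - 1) * (1 - (t : ℂ)) ^ ((b : ℂ) - 1) := by
  rw [Complex.ofReal_mul, Complex.ofReal_cpow ht.1, Complex.ofReal_cpow (sub_nonneg.2 ht.2)]
  push_cast
  rfl

lemma integrableOn_rpow_mul_one_sub_rpow {a b : ℝ} (ha : 0 < a) (hb : 0 < b) :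
    IntegrableOn (fun t : ℝ => t ^ (a - 1) * (1 - t) ^ (b - 1)) (Ioo 0 1) := by
  have h := (intervalIntegrable_iff_integrableOn_Ioo_of_le zero_le_one).1
    (Complex.betaIntegral_convergent (u := a) (v := b) (by simpa) (by simpa))
  refine IntegrableOn.congr_fun h.re (fun t ht => ?_) measurableSet_Ioo
  rw [← ofReal_rpow_mul_one_sub_rpow (Ioo_subset_Icc_self ht)]
  exact Complex.ofReal_re _

lemma integral_rpow_mul_one_sub_rpow {a b : ℝ} (ha : 0 < a) (hb : 0 < b) :
    ∫ t in Ioo (0 : ℝ) 1, t ^ (a - 1) * (1 - t) ^ (b - 1) =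
      Real.Gamma a * Real.Gamma b / Real.Gamma (a + b) := by
  have hbeta : Complex.betaIntegral a b =
      ((∫ t in (0 : ℝ)..1, t ^ (a - 1) * (1 - t) ^ (b - 1) : ℝ) : ℂ) := by
    rw [Complex.betaIntegral, ← intervalIntegral.integral_ofReal]
    refine intervalIntegral.integral_congr fun t ht => ?_
    rw [uIcc_of_le zero_le_one] at ht
    exact (ofReal_rpow_mul_one_sub_rpow ht).symm
  have hΓ := Complex.Gamma_mul_Gamma_eq_betaIntegral (s := a) (t := b) (by simpa) (by simpa)
  rw [hbeta, ← Complex.ofReal_add, Complex.Gamma_ofReal, Complex.Gamma_ofReal,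
    Complex.Gamma_ofReal] at hΓ
  rw [intervalIntegral.integral_of_le zero_le_one, integral_Ioc_eq_integral_Ioo] at hΓ
  have hΓ' : Real.Gamma a * Real.Gamma b = Real.Gamma (a + b) *
      ∫ t in Ioo (0 : ℝ) 1, t ^ (a - 1) * (1 - t) ^ (b - 1) := by exact_mod_cast hΓ
  rw [eq_div_iff (Real.Gamma_pos_of_pos (add_pos ha hb)).ne', hΓ', mul_comm]

lemma lintegral_rpow_mul_one_sub_rpow {a b : ℝ} (ha : 0 < a) (hb : 0 < b) :
    ∫⁻ t in Ioo (0 : ℝ) 1, ENNReal.ofReal (t ^ (a - 1) * (1 - t) ^ (b - 1)) =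
      ENNReal.ofReal (Real.Gamma a * Real.Gamma b / Real.Gamma (a + b)) := by
  rw [← integral_rpow_mul_one_sub_rpow ha hb, ofReal_integral_eq_lintegral_ofReal
    (integrableOn_rpow_mul_one_sub_rpow ha hb)]
  filter_upwards [ae_restrict_mem measurableSet_Ioo] with t ht
  exact mul_nonneg (Real.rpow_nonneg ht.1.le _) (Real.rpow_nonneg (sub_nonneg.2 ht.2.le) _)

theorem lintegral_eq_ofReal_pow_mul_lintegral_comp_smul {E : Type*} [NormedAddCommGroup E]
    [NormedSpace ℝ E] [MeasurableSpace E] [BorelSpace E] [FiniteDimensional ℝ E]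
    (μ : Measure E) [μ.IsAddHaarMeasure] (f : E → ℝ≥0∞) {r : ℝ} (hr : 0 < r) :
    ∫⁻ x, f x ∂μ =
      ENNReal.ofReal (r ^ Module.finrank ℝ E) * ∫⁻ x, f (r • x) ∂μ := by
  have hpow : 0 < r ^ Module.finrank ℝ E := pow_pos hr _
  let e := (Homeomorph.smulOfNeZero (α := E) r hr.ne').toMeasurableEquiv
  have := lintegral_map_equiv f e (μ := μ)
  rw [show (e : E → E) = (r • ·) from rfl, Measure.map_addHaar_smul μ hr.ne',
    lintegral_smul_measure, abs_of_pos (inv_pos.2 hpow)] at this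
  rw [← this, smul_eq_mul, ← mul_assoc, ← ENNReal.ofReal_mul hpow.le,
    mul_inv_cancel₀ hpow.ne', ENNReal.ofReal_one, one_mul]

theorem lintegral_fin_cons {E : Type*} [MeasureSpace E] [SigmaFinite (volume : Measure E)]
    {m : ℕ} {f : (Fin (m + 1) → E) → ℝ≥0∞} (hf : Measurable f) :
    ∫⁻ x, f x = ∫⁻ t, ∫⁻ y, f (Fin.cons t y) := by
  let e := (MeasurableEquiv.piFinSuccAbove (fun _ : Fin (m + 1) => E) 0).symm
  rw [← (volume_preserving_piFinSuccAbove (fun _ : Fin (m + 1) => E) 0).symm.lintegral_comp_emb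
    e.measurableEmbedding, Measure.volume_eq_prod,
    lintegral_prod (fun p => f (e p)) (hf.comp e.measurable).aemeasurable]
  simp only [e, MeasurableEquiv.piFinSuccAbove_symm_apply, Fin.insertNthEquiv, Equiv.coe_fn_mk,
    Fin.insertNth_zero']

/-! ### The open simplex -/

/-- `dirSimplex (m + 1)`, typed on `Fin m → ℝ` to keep the truncated subtraction
`m + 1 - 1` out of the types below. -/
def openSimplex (m : ℕ) : Set (Fin m → ℝ) := dirSimplex (m + 1)

lemma measurableSet_openSimplex (m : ℕ) : MeasurableSet (openSimplex m) := by
  unfold openSimplex dirSimplex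
  measurability

lemma measurable_probVec (m : ℕ) (i : Fin (m + 1)) :
    Measurable fun x : Fin m → ℝ => probVec (m + 1) x i := by
  unfold probVec
  split_ifs <;> fun_prop

lemma probVec_succ {m : ℕ} (x : Fin m → ℝ) :
    probVec (m + 1) x = Fin.snoc (α := fun _ => ℝ) x (1 - ∑ j, x j) := by
  funext i
  refine Fin.lastCases ?_ (fun j => ?_) i <;> simp [probVec, Fin.snoc]

lemma sum_probVec {m : ℕ} (x : Fin m → ℝ) : ∑ i, probVec (m + 1) x i = 1 := by
  simp [probVec_succ, Fin.sum_univ_castSucc]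

lemma mem_openSimplex_iff_probVec_pos {m : ℕ} {x : Fin m → ℝ} :
    x ∈ openSimplex m ↔ ∀ i, 0 < probVec (m + 1) x i := by
  simp [openSimplex, dirSimplex, probVec_succ, Fin.forall_fin_succ', sub_pos]

lemma probVec_le_one {m : ℕ} {x : Fin m → ℝ} (hx : x ∈ openSimplex m) (i : Fin (m + 1)) :
    probVec (m + 1) x i ≤ 1 :=
  sum_probVec x ▸ Finset.single_le_sum
    (fun j _ => (mem_openSimplex_iff_probVec_pos.1 hx j).le) (Finset.mem_univ i)

lemma probVec_cons_smul {m : ℕ} (t : ℝ) (z : Fin m → ℝ) :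
    probVec (m + 2) (Fin.cons t ((1 - t) • z)) = Fin.cons t ((1 - t) • probVec (m + 1) z) := by
  rw [probVec_succ, probVec_succ, Fin.sum_cons, ← Fin.cons_snoc_eq_snoc_cons]
  congr 1
  funext j
  refine Fin.lastCases ?_ (fun j => ?_) j
  · simp only [Fin.snoc_last, Pi.smul_apply, smul_eq_mul, ← Finset.mul_sum]
    ring
  · simp

lemma cons_smul_mem_openSimplex_iff {m : ℕ} {t : ℝ} (ht : t ∈ Ioo (0 : ℝ) 1)
    (z : Fin m → ℝ) :
    Fin.cons t ((1 - t) • z) ∈ openSimplex (m + 1) ↔ z ∈ openSimplex m := by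
  simp only [mem_openSimplex_iff_probVec_pos, probVec_cons_smul, Fin.forall_fin_succ,
    Fin.cons_zero, Fin.cons_succ, Pi.smul_apply, smul_eq_mul, ht.1, true_and,
    mul_pos_iff_of_pos_left (sub_pos.2 ht.2)]

lemma mem_Ioo_of_cons_mem_openSimplex {m : ℕ} {t : ℝ} {y : Fin m → ℝ}
    (h : Fin.cons t y ∈ openSimplex (m + 1)) : t ∈ Ioo (0 : ℝ) 1 := by
  obtain ⟨hpos, hsum⟩ : (∀ i, 0 < (Fin.cons t y : Fin (m + 1) → ℝ) i) ∧
      ∑ i, (Fin.cons t y : Fin (m + 1) → ℝ) i < 1 := h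
  have ht : 0 < t := by simpa using hpos 0
  have hy : 0 ≤ ∑ j, y j := Finset.sum_nonneg fun j _ => by simpa using (hpos j.succ).le
  rw [Fin.sum_cons] at hsum
  exact ⟨ht, by linarith⟩

/-! ### Dirichlet integral -/

noncomputable def dirKernel {m : ℕ} (β : Fin (m + 1) → ℝ) (x : Fin m → ℝ) : ℝ :=
  ∏ i, probVec (m + 1) x i ^ (β i - 1)

noncomputable def multiBeta {ι : Type*} [Fintype ι] (β : ι → ℝ) : ℝ :=
  (∏ i, Real.Gamma (β i)) / Real.Gamma (∑ i, β i)

lemma multiBeta_pos {ι : Type*} [Fintype ι] [Nonempty ι] {β : ι → ℝ}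
    (hβ : ∀ i, 0 < β i) : 0 < multiBeta β :=
  div_pos (Finset.prod_pos fun i _ => Real.Gamma_pos_of_pos (hβ i))
    (Real.Gamma_pos_of_pos (Finset.sum_pos (fun i _ => hβ i) Finset.univ_nonempty))

lemma multiBeta_fin_succ {m : ℕ} (β : Fin (m + 2) → ℝ)
    (h : Real.Gamma (∑ i, β (Fin.succ i)) ≠ 0) :
    multiBeta β = Real.Gamma (β 0) * Real.Gamma (∑ i, β (Fin.succ i)) /
      Real.Gamma (β 0 + ∑ i, β (Fin.succ i)) * multiBeta (Fin.tail β) := by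
  simp only [multiBeta, Fin.prod_univ_succ, Fin.sum_univ_succ (f := β), Fin.tail]
  field_simp

lemma measurable_dirKernel {m : ℕ} (β : Fin (m + 1) → ℝ) : Measurable (dirKernel β) :=
  Finset.measurable_prod _ fun i _ => (measurable_probVec m i).pow_const _

lemma dirKernel_nonneg {m : ℕ} (β : Fin (m + 1) → ℝ) {x : Fin m → ℝ}
    (hx : ∀ i, 0 ≤ probVec (m + 1) x i) : 0 ≤ dirKernel β x :=
  Finset.prod_nonneg fun i _ => Real.rpow_nonneg (hx i) _

lemma dirKernel_cons_smul {m : ℕ} (β : Fin (m + 2) → ℝ) {t : ℝ} (ht : t < 1)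
    {z : Fin m → ℝ} (hz : z ∈ openSimplex m) :
    dirKernel β (Fin.cons t ((1 - t) • z)) =
      t ^ (β 0 - 1) * (1 - t) ^ (∑ i, β (Fin.succ i) - (m + 1)) *
        dirKernel (Fin.tail β) z := by
  have h1t : 0 < 1 - t := sub_pos.2 ht
  have hp := mem_openSimplex_iff_probVec_pos.1 hz
  rw [dirKernel, probVec_cons_smul, Fin.prod_univ_succ]
  simp only [Fin.cons_zero, Fin.cons_succ, Pi.smul_apply, smul_eq_mul, dirKernel, Fin.tail]
  rw [Finset.prod_congr rfl fun i _ => Real.mul_rpow h1t.le (hp i).le, Finset.prod_mul_distrib,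
    ← Real.rpow_sum_of_pos h1t, Finset.sum_sub_distrib]
  simp only [Finset.sum_const, Finset.card_univ, Fintype.card_fin, nsmul_eq_mul, mul_one,
    Nat.cast_add, Nat.cast_one]
  ring

lemma lintegral_indicator_dirKernel_cons {m : ℕ} (β : Fin (m + 2) → ℝ) {t : ℝ}
    (ht : t ∈ Ioo (0 : ℝ) 1) :
    ∫⁻ y, (openSimplex (m + 1)).indicator (fun x => ENNReal.ofReal (dirKernel β x))
        (Fin.cons t y) =
      ENNReal.ofReal (t ^ (β 0 - 1) * (1 - t) ^ (∑ i, β (Fin.succ i) - 1)) *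
        ∫⁻ z in openSimplex m, ENNReal.ofReal (dirKernel (Fin.tail β) z) := by
  have h1t : 0 < 1 - t := sub_pos.2 ht.2
  have hcons : ∀ z : Fin m → ℝ,
      (openSimplex (m + 1)).indicator (fun x => ENNReal.ofReal (dirKernel β x))
        (Fin.cons t ((1 - t) • z)) =
      ENNReal.ofReal (t ^ (β 0 - 1) * (1 - t) ^ (∑ i, β (Fin.succ i) - (m + 1))) *
        (openSimplex m).indicator (fun z => ENNReal.ofReal (dirKernel (Fin.tail β) z)) z := by
    intro z
    by_cases hz : z ∈ openSimplex m
    · rw [indicator_of_mem ((cons_smul_mem_openSimplex_iff ht z).2 hz), indicator_of_mem hz,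
        dirKernel_cons_smul β ht.2 hz,
        ENNReal.ofReal_mul (mul_nonneg (Real.rpow_nonneg ht.1.le _) (Real.rpow_nonneg h1t.le _))]
    · rw [indicator_of_notMem (mt (cons_smul_mem_openSimplex_iff ht z).1 hz),
        indicator_of_notMem hz, mul_zero]
  rw [lintegral_eq_ofReal_pow_mul_lintegral_comp_smul volume _ h1t, Module.finrank_fin_fun]
  simp_rw [hcons]
  rw [lintegral_const_mul' _ _ ENNReal.ofReal_ne_top,
    lintegral_indicator (measurableSet_openSimplex _),
    ← mul_assoc, ← ENNReal.ofReal_mul (by positivity), ← Real.rpow_natCast]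
  congr 2
  rw [mul_left_comm, ← Real.rpow_add h1t]
  ring_nf

-- In `ℝ≥0∞` Tonelli applies with no integrability side conditions.
lemma lintegral_dirKernel {m : ℕ} {β : Fin (m + 1) → ℝ} (hβ : ∀ i, 0 < β i) :
    ∫⁻ x in openSimplex m, ENNReal.ofReal (dirKernel β x) = ENNReal.ofReal (multiBeta β) := by
  induction m with
  | zero =>
    have hS : openSimplex 0 = univ := by ext x; simp [openSimplex, dirSimplex]
    have hK : ∀ x, dirKernel β x = 1 := fun x => by simp [dirKernel, probVec]
    simp [hS, hK, multiBeta, (Real.Gamma_pos_of_pos (hβ 0)).ne', volume_pi]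
  | succ m ih =>
    have hB : 0 < ∑ i, β (Fin.succ i) := Finset.sum_pos (fun i _ => hβ _) Finset.univ_nonempty
    have hinner : ∀ t, ∫⁻ y, (openSimplex (m + 1)).indicator
          (fun x => ENNReal.ofReal (dirKernel β x)) (Fin.cons t y) =
        (Ioo (0 : ℝ) 1).indicator (fun t => ENNReal.ofReal
          (t ^ (β 0 - 1) * (1 - t) ^ (∑ i, β (Fin.succ i) - 1)) *
            ENNReal.ofReal (multiBeta (Fin.tail β))) t := by
      intro t
      by_cases ht : t ∈ Ioo (0 : ℝ) 1
      · rw [indicator_of_mem ht, lintegral_indicator_dirKernel_cons β ht,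
          ih (β := Fin.tail β) fun i => hβ _]
      · rw [indicator_of_notMem ht]
        exact (lintegral_congr fun y =>
          indicator_of_notMem (mt mem_Ioo_of_cons_mem_openSimplex ht) _).trans lintegral_zero
    rw [← lintegral_indicator (measurableSet_openSimplex _), lintegral_fin_cons
      ((measurable_dirKernel β).ennreal_ofReal.indicator (measurableSet_openSimplex _))]
    simp_rw [hinner]
    rw [lintegral_indicator measurableSet_Ioo, lintegral_mul_const' _ _ ENNReal.ofReal_ne_top,
      lintegral_rpow_mul_one_sub_rpow (hβ 0) hB, ← ENNReal.ofReal_mul,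
      ← multiBeta_fin_succ β (Real.Gamma_pos_of_pos hB).ne']
    exact div_nonneg (mul_nonneg (Real.Gamma_pos_of_pos (hβ 0)).le (Real.Gamma_pos_of_pos hB).le)
      (Real.Gamma_pos_of_pos (add_pos (hβ 0) hB)).le

lemma dirKernel_nonneg_ae {m : ℕ} (β : Fin (m + 1) → ℝ) :
    0 ≤ᵐ[volume.restrict (openSimplex m)] dirKernel β := by
  filter_upwards [ae_restrict_mem (measurableSet_openSimplex m)] with x hx
  exact dirKernel_nonneg β fun i => (mem_openSimplex_iff_probVec_pos.1 hx i).le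

lemma integrableOn_dirKernel {m : ℕ} {β : Fin (m + 1) → ℝ} (hβ : ∀ i, 0 < β i) :
    IntegrableOn (dirKernel β) (openSimplex m) :=
  ⟨(measurable_dirKernel β).aestronglyMeasurable, by
    rw [hasFiniteIntegral_iff_ofReal (dirKernel_nonneg_ae β), lintegral_dirKernel hβ]
    exact ENNReal.ofReal_lt_top⟩

lemma integral_dirKernel {m : ℕ} {β : Fin (m + 1) → ℝ} (hβ : ∀ i, 0 < β i) :
    ∫ x in openSimplex m, dirKernel β x = multiBeta β := by
  rw [integral_eq_lintegral_of_nonneg_ae (dirKernel_nonneg_ae β)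
    (measurable_dirKernel β).aestronglyMeasurable, lintegral_dirKernel hβ,
    ENNReal.toReal_ofReal (multiBeta_pos hβ).le]

/-! ### Logarithmic moments -/

lemma abs_log_mul_rpow_le {p ε e s : ℝ} (hp : p ∈ Ioc (0 : ℝ) 1) (hε : 0 < ε)
    (hs : e + ε ≤ s) : |Real.log p| * p ^ s ≤ ε⁻¹ * p ^ e := by
  have hlog : |Real.log p| ≤ ε⁻¹ * p ^ (-ε) := by
    rw [abs_of_nonpos (Real.log_nonpos hp.1.le hp.2), ← Real.log_inv, Real.rpow_neg hp.1.le,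
      ← Real.inv_rpow hp.1.le, inv_mul_eq_div]
    exact Real.log_le_rpow_div (inv_nonneg.2 hp.1.le) hε
  calc |Real.log p| * p ^ s ≤ ε⁻¹ * p ^ (-ε) * p ^ (e + ε) :=
        mul_le_mul hlog (Real.rpow_le_rpow_of_exponent_ge hp.1 hp.2 hs)
          (Real.rpow_nonneg hp.1.le _)
          (mul_nonneg (inv_nonneg.2 hε.le) (Real.rpow_nonneg hp.1.le _))
    _ = ε⁻¹ * p ^ e := by
        rw [mul_assoc, ← Real.rpow_add hp.1]
        ring_nf

theorem hasDerivAt_integral_rpow_mul {X : Type*} [MeasurableSpace X] {μ : Measure X}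
    {p w : X → ℝ} {a c : ℝ} (hca : c < a) (hp : ∀ᵐ x ∂μ, p x ∈ Ioc (0 : ℝ) 1)
    (hpm : AEMeasurable p μ) (hw : AEStronglyMeasurable w μ)
    (hint : Integrable (fun x => p x ^ (c - 1) * w x) μ) :
    HasDerivAt (fun s => ∫ x, p x ^ (s - 1) * w x ∂μ)
      (∫ x, Real.log (p x) * (p x ^ (a - 1) * w x) ∂μ) a := by
  set ε := (a - c) / 2 with hεdef
  have hε : 0 < ε := half_pos (sub_pos.2 hca)
  have hmeas : ∀ s : ℝ, AEStronglyMeasurable (fun x => p x ^ (s - 1) * w x) μ := fun s =>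
    (hpm.pow_const _).aestronglyMeasurable.mul hw
  have hbound : ∀ᵐ x ∂μ, ∀ s ∈ Metric.ball a ε,
      ‖Real.log (p x) * (p x ^ (s - 1) * w x)‖ ≤ ε⁻¹ * ‖p x ^ (c - 1) * w x‖ := by
    filter_upwards [hp] with x hx s hs
    rw [Metric.mem_ball, Real.dist_eq, abs_sub_lt_iff] at hs
    simp only [norm_mul, Real.norm_of_nonneg (Real.rpow_nonneg hx.1.le _), Real.norm_eq_abs,
      ← mul_assoc]
    exact mul_le_mul_of_nonneg_right (abs_log_mul_rpow_le hx hε (by linarith [hεdef]))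
      (abs_nonneg _)
  have hderiv : ∀ᵐ x ∂μ, ∀ s ∈ Metric.ball a ε,
      HasDerivAt (fun s => p x ^ (s - 1) * w x) (Real.log (p x) * (p x ^ (s - 1) * w x)) s := by
    filter_upwards [hp] with x hx s _
    have := ((Real.hasStrictDerivAt_const_rpow hx.1 (s - 1)).hasDerivAt.comp s
      ((hasDerivAt_id s).sub_const 1)).mul_const (w x)
    exact this.congr_deriv (by simp; ring)
  have hint_a : Integrable (fun x => p x ^ (a - 1) * w x) μ := by
    refine hint.mono (hmeas a) ?_
    filter_upwards [hp] with x hx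
    simp only [norm_mul, Real.norm_of_nonneg (Real.rpow_nonneg hx.1.le _)]
    exact mul_le_mul_of_nonneg_right
      (Real.rpow_le_rpow_of_exponent_ge hx.1 hx.2 (by linarith)) (norm_nonneg _)
  exact (hasDerivAt_integral_of_dominated_loc_of_deriv_le (Metric.ball_mem_nhds a hε)
    (Eventually.of_forall hmeas) hint_a
    ((hpm.log.aestronglyMeasurable).mul (hmeas a)) hbound (hint.norm.const_mul _) hderiv).2

lemma hasDerivAt_Gamma_mul_digamma {s : ℝ} (hs : 0 < s) :
    HasDerivAt Real.Gamma (Real.Gamma s * digamma s) s := by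
  have hd := Real.differentiableAt_Gamma (s := s) fun m =>
    ((neg_nonpos.2 m.cast_nonneg).trans_lt hs).ne'
  have hΓ := (Real.Gamma_pos_of_pos hs).ne'
  rw [digamma, (hd.hasDerivAt.log hΓ).deriv, mul_div_cancel₀ _ hΓ]
  exact hd.hasDerivAt

lemma hasDerivAt_Gamma_div_Gamma_add {a r : ℝ} (ha : 0 < a) (har : 0 < a + r) :
    HasDerivAt (fun s => Real.Gamma s / Real.Gamma (s + r))
      (Real.Gamma a / Real.Gamma (a + r) * (digamma a - digamma (a + r))) a := by
  have hΓ := (Real.Gamma_pos_of_pos har).ne'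
  refine ((hasDerivAt_Gamma_mul_digamma ha).fun_div
    ((hasDerivAt_Gamma_mul_digamma har).comp_add_const a r) hΓ).congr_deriv ?_
  field_simp

lemma Gamma_add_nat_eq_risingFac_mul {z : ℝ} (hz : 0 < z) (n : ℕ) :
    Real.Gamma (z + n) = risingFac z n * Real.Gamma z := by
  induction n with
  | zero => simp [risingFac]
  | succ n ih =>
    rw [Nat.cast_succ, ← add_assoc, Real.Gamma_add_one (by positivity), ih, risingFac,
      risingFac, Finset.prod_range_succ]
    ring

lemma multiBeta_update {ι : Type*} [Fintype ι] [DecidableEq ι] (β : ι → ℝ) (i : ι) (s : ℝ) :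
    multiBeta (update β i s) = Real.Gamma s / Real.Gamma (s + ∑ j ∈ {i}ᶜ, β j) *
      ∏ j ∈ {i}ᶜ, Real.Gamma (β j) := by
  have hne : ∀ j ∈ ({i}ᶜ : Finset ι), update β i s j = β j := fun j hj =>
    update_of_ne (by simpa using hj) _ _
  rw [multiBeta, Fintype.prod_eq_mul_prod_compl i, Fintype.sum_eq_add_sum_compl i, update_self,
    Finset.prod_congr rfl fun j hj => congrArg Real.Gamma (hne j hj), Finset.sum_congr rfl hne]
  ring

lemma dirKernel_update {m : ℕ} (β : Fin (m + 1) → ℝ) (i : Fin (m + 1)) (s : ℝ)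
    (x : Fin m → ℝ) : dirKernel (update β i s) x =
      probVec (m + 1) x i ^ (s - 1) * ∏ j ∈ {i}ᶜ, probVec (m + 1) x j ^ (β j - 1) := by
  rw [dirKernel, Fintype.prod_eq_mul_prod_compl i, update_self]
  congr 1
  refine Finset.prod_congr rfl fun j hj => ?_
  rw [update_of_ne (by simpa using hj)]

theorem integral_log_mul_dirKernel {m : ℕ} {β : Fin (m + 1) → ℝ} (hβ : ∀ i, 0 < β i)
    (i : Fin (m + 1)) :
    ∫ x in openSimplex m, Real.log (probVec (m + 1) x i) * dirKernel β x =
      multiBeta β * (digamma (β i) - digamma (∑ j, β j)) := by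
  set w : (Fin m → ℝ) → ℝ := fun x => ∏ j ∈ {i}ᶜ, probVec (m + 1) x j ^ (β j - 1)
  set R := ∑ j ∈ {i}ᶜ, β j
  set P := ∏ j ∈ {i}ᶜ, Real.Gamma (β j)
  have hR : 0 ≤ R := Finset.sum_nonneg fun j _ => (hβ j).le
  have hupdate_pos : ∀ s, 0 < s → ∀ j, 0 < update β i s j := fun s hs =>
    forall_update_iff β (p := fun _ b => 0 < b) |>.2 ⟨hs, fun j _ => hβ j⟩
  have hZ : ∀ s, 0 < s → ∫ x in openSimplex m, probVec (m + 1) x i ^ (s - 1) * w x =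
      Real.Gamma s / Real.Gamma (s + R) * P := fun s hs => by
    simp_rw [w, ← dirKernel_update]
    rw [integral_dirKernel (hupdate_pos s hs), multiBeta_update]
  have hp : ∀ᵐ x : Fin m → ℝ ∂volume.restrict (openSimplex m),
      probVec (m + 1) x i ∈ Ioc (0 : ℝ) 1 := by
    filter_upwards [ae_restrict_mem (measurableSet_openSimplex m)] with x hx
    exact ⟨mem_openSimplex_iff_probVec_pos.1 hx i, probVec_le_one hx i⟩
  have hint : Integrable (fun x => probVec (m + 1) x i ^ (β i / 2 - 1) * w x)
      (volume.restrict (openSimplex m)) :=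
    (integrableOn_dirKernel (hupdate_pos _ (half_pos (hβ i)))).congr
      (Eventually.of_forall fun x => dirKernel_update β i _ x)
  have hderiv := hasDerivAt_integral_rpow_mul (half_lt_self (hβ i)) hp
    (measurable_probVec m i).aemeasurable
    (Finset.measurable_prod _ fun j _ => (measurable_probVec m j).pow_const _).aestronglyMeasurable
    hint
  have hderiv' :=
    (hasDerivAt_Gamma_div_Gamma_add (r := R) (hβ i) (by linarith [hβ i])).mul_const P
  have hkernel : ∀ x, dirKernel β x = probVec (m + 1) x i ^ (β i - 1) * w x := fun x => by
    rw [← dirKernel_update, update_eq_self]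
  have hmultiBeta : multiBeta β = Real.Gamma (β i) / Real.Gamma (β i + R) * P := by
    simpa only [update_eq_self] using multiBeta_update β i (β i)
  simp_rw [hkernel]
  rw [hmultiBeta, Fintype.sum_eq_add_sum_compl i, hderiv.unique (hderiv'.congr_of_eventuallyEq ?_)]
  · ring
  · filter_upwards [eventually_gt_nhds (hβ i)] with s hs using hZ s hs

lemma dirDensity_eq_inv_multiBeta_mul {m : ℕ} (α : Fin (m + 1) → ℝ) (x : Fin m → ℝ) :
    dirDensity α x = (multiBeta α)⁻¹ * dirKernel α x := by
  rw [dirDensity, multiBeta, inv_div]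
  rfl

lemma dirKernel_update_add {m : ℕ} (β : Fin (m + 1) → ℝ) (i : Fin (m + 1)) (r : ℝ)
    {x : Fin m → ℝ} (hx : 0 < probVec (m + 1) x i) :
    dirKernel (update β i (β i + r)) x = probVec (m + 1) x i ^ r * dirKernel β x := by
  conv_rhs => rw [← update_eq_self i β, dirKernel_update]
  rw [dirKernel_update, ← mul_assoc, ← Real.rpow_add hx]
  ring_nf

lemma multiBeta_update_add_nat {m : ℕ} {α : Fin (m + 1) → ℝ} (hα : ∀ j, 0 < α j)
    (i : Fin (m + 1)) (n : ℕ) :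
    multiBeta (update α i (α i + n)) =
      risingFac (α i) n / risingFac (∑ j, α j) n * multiBeta α := by
  have hR : 0 ≤ ∑ j ∈ {i}ᶜ, α j := Finset.sum_nonneg fun j _ => (hα j).le
  have hα₀ : 0 < α i + ∑ j ∈ {i}ᶜ, α j := by linarith [hα i]
  rw [← update_eq_self i α, multiBeta_update, multiBeta_update, update_self, update_eq_self,
    Fintype.sum_eq_add_sum_compl i, add_right_comm, Gamma_add_nat_eq_risingFac_mul (hα i),
    Gamma_add_nat_eq_risingFac_mul hα₀]
  ring

theorem dirichlet_log_moment_general (K : ℕ) (α : Fin K → ℝ)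
    (hα : ∀ i, 0 < α i) (i : Fin K) (n : ℕ) :
    dirE α (fun p => p i ^ n * Real.log (p i)) =
      (risingFac (α i) n / risingFac (∑ k, α k) n) *
        (digamma (α i + n) - digamma ((∑ k, α k) + n)) := by
  obtain ⟨m, rfl⟩ : ∃ m, K = m + 1 := ⟨K - 1, by have := i.pos; omega⟩
  set β := update α i (α i + n)
  have hβi : β i = α i + n := update_self i _ α
  have hβ : ∀ j, 0 < β j := forall_update_iff α (p := fun _ b => 0 < b) |>.2
    ⟨add_pos_of_pos_of_nonneg (hα i) n.cast_nonneg, fun j _ => hα j⟩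
  have hmoment : dirE α (fun p => p i ^ n * Real.log (p i)) = (multiBeta α)⁻¹ *
      ∫ x in openSimplex m, Real.log (probVec (m + 1) x i) * dirKernel β x := by
    rw [dirE, ← integral_const_mul]
    refine setIntegral_congr_fun (measurableSet_openSimplex m) fun x hx => ?_
    rw [dirDensity_eq_inv_multiBeta_mul, dirKernel_update_add α i n
      (mem_openSimplex_iff_probVec_pos.1 hx i), Real.rpow_natCast]
    ring
  have hsum : ∑ j, β j = ∑ j, α j + n := by
    rw [Finset.sum_update_of_mem (Finset.mem_univ i),
      Finset.sum_eq_add_sum_sdiff_singleton_of_mem (Finset.mem_univ i) α]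
    ring
  rw [hmoment, integral_log_mul_dirKernel hβ, multiBeta_update_add_nat hα, hsum, hβi]
  have := (multiBeta_pos hα).ne'
  field_simp

/-- **Dirichlet moment:** for every index `i` and `n : ℕ`,
`E_α[pᵢⁿ log pᵢ] = (αᵢ^{(n)} / α₀^{(n)}) (ψ(αᵢ+n) - ψ(α₀+n))`. -/
theorem dirichlet_log_moment (K : ℕ) (hK : 1 ≤ K) (α : Fin K → ℝ)
    (hα : ∀ i, 0 < α i) (i : Fin K) (n : ℕ) :
    dirE α (fun p => p i ^ n * Real.log (p i)) =
      (risingFac (α i) n / risingFac (∑ k, α k) n) *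
        (digamma (α i + n) - digamma ((∑ k, α k) + n)) :=
  dirichlet_log_moment_general K α hα i n
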